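/- arXiv:2210.12149 — 7 statements merged into one kernel-verified Lean document; each statement's English description precedes it below -/
import Mathlib

section
/- For a prime p and positive integer α, the entropy H̄(p^α) := log σ(p^α) - (1/σ(p^α)) · Σ_{d|p^α} d·log d equals -((α+1)·log p)/(p^{α+1}-1) + log((1-p^{-(α+1)})/(p-1)) + (p·log p)/(p-1). -/
open Real Filter

/-- σ(n): the sum of the divisors of n. -/
def sigma1 (n : ℕ) : ℕ := ∑ d ∈ n.divisors, d

/-- The entropy H̄ of a natural number. -/
noncomputable def Hbar (n : ℕ) : ℝ :=
  Real.log (sigma1 n) -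
    (1 / (sigma1 n : ℝ)) * ∑ d ∈ n.divisors, (d : ℝ) * Real.log d

/-!
The divisors of `p ^ α` are the powers `p ^ i`, `i ≤ α`, so `H̄(p ^ α) = log S - (T / S) log p`
with `S = ∑ pⁱ` and `T = ∑ i pⁱ`. The ratio `T / S` is the mean exponent of a divisor, which has
the closed form `(α + 1) p^(α+1) / (p^(α+1) - 1) - p / (p - 1)`, and
`log S = (α + 1) log p + log ((1 - p^-(α+1)) / (p - 1))`.
-/

open Finset

theorem sum_range_mul_pow_mul_sub_one_sq {R : Type*} [CommRing R] (x : R) (n : ℕ) :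
    (∑ i ∈ range (n + 1), (i : R) * x ^ i) * (x - 1) ^ 2
      = n * x ^ (n + 2) - (n + 1) * x ^ (n + 1) + x := by
  induction n with
  | zero => simp
  | succ n ih =>
    rw [sum_range_succ, add_mul, ih]
    push_cast
    ring

theorem sum_range_mul_pow_div_geom_sum {K : Type*} [Field K] {x : K} {n : ℕ} (hx : x ≠ 1)
    (hxn : x ^ (n + 1) ≠ 1) :
    (∑ i ∈ range (n + 1), (i : K) * x ^ i) / ∑ i ∈ range (n + 1), x ^ i
      = (n + 1) * x ^ (n + 1) / (x ^ (n + 1) - 1) - x / (x - 1) := by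
  have hx' : x - 1 ≠ 0 := sub_ne_zero.mpr hx
  have hxn' : x ^ (n + 1) - 1 ≠ 0 := sub_ne_zero.mpr hxn
  rw [geom_sum_eq hx]
  field_simp
  linear_combination sum_range_mul_pow_mul_sub_one_sq x n

theorem Real.log_geom_sum {x : ℝ} (hx : 1 < x) (n : ℕ) :
    log (∑ i ∈ range (n + 1), x ^ i)
      = (n + 1) * log x + log ((1 - (x ^ (n + 1))⁻¹) / (x - 1)) := by
  have hxn : 1 < x ^ (n + 1) := one_lt_pow₀ hx n.succ_ne_zero
  have hsum : ∑ i ∈ range (n + 1), x ^ i = x ^ (n + 1) * ((1 - (x ^ (n + 1))⁻¹) / (x - 1)) := by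
    rw [geom_sum_eq hx.ne', mul_div_assoc', mul_sub, mul_inv_cancel₀ (by positivity), mul_one]
  have hfactor : 0 < (1 - (x ^ (n + 1))⁻¹) / (x - 1) :=
    div_pos (sub_pos.mpr (inv_lt_one_of_one_lt₀ hxn)) (sub_pos.mpr hx)
  rw [hsum, log_mul (by positivity) hfactor.ne', log_pow]
  push_cast
  ring

theorem Hbar_prime_pow {p : ℕ} (hp : p.Prime) (k : ℕ) :
    Hbar (p ^ k) = log (∑ i ∈ range (k + 1), (p : ℝ) ^ i)
      - (∑ i ∈ range (k + 1), (i : ℝ) * (p : ℝ) ^ i) / (∑ i ∈ range (k + 1), (p : ℝ) ^ i)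
        * log p := by
  simp only [Hbar, sigma1, Nat.sum_divisors_prime_pow hp, Nat.cast_sum, Nat.cast_pow, log_pow]
  rw [one_div_mul_eq_div, div_mul_eq_mul_div, sum_mul]
  congr 2
  exact sum_congr rfl fun i _ ↦ by ring

theorem stmt_0_general (p α : ℕ) (hp : p.Prime) :
    Hbar (p ^ α) =
      -(((α : ℝ) + 1) * Real.log p) / ((p : ℝ) ^ (α + 1) - 1) +
        Real.log ((1 - ((p : ℝ) ^ (α + 1))⁻¹) / ((p : ℝ) - 1)) +
        (p : ℝ) * Real.log p / ((p : ℝ) - 1) := by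
  have hp1 : (1 : ℝ) < p := by exact_mod_cast hp.one_lt
  have hpn : (1 : ℝ) < (p : ℝ) ^ (α + 1) := one_lt_pow₀ hp1 α.succ_ne_zero
  rw [Hbar_prime_pow hp, Real.log_geom_sum hp1, sum_range_mul_pow_div_geom_sum hp1.ne' hpn.ne']
  have hpn' : (p : ℝ) ^ (α + 1) - 1 ≠ 0 := sub_ne_zero.mpr hpn.ne'
  field_simp
  ring

theorem stmt_0 (p α : ℕ) (hp : p.Prime) (hα : 1 ≤ α) :
    Hbar (p ^ α) =
      -(((α : ℝ) + 1) * Real.log p) / ((p : ℝ) ^ (α + 1) - 1) +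
        Real.log ((1 - ((p : ℝ) ^ (α + 1))⁻¹) / ((p : ℝ) - 1)) +
        (p : ℝ) * Real.log p / ((p : ℝ) - 1) :=
  stmt_0_general p α hp
end

section
/- The entropy H̄ is additive on coprime arguments: if m, n are positive integers with gcd(m,n)=1, then H̄(mn) = H̄(m) + H̄(n). -/
open Real Filter

/-!
For coprime `m` and `n` every divisor of `m * n` is uniquely a product `a * b` with `a ∣ m` and
`b ∣ n`. So `σ` is multiplicative, and the identity `ab log(ab) = b (a log a) + a (b log b)` turns
`∑_{d ∣ mn} d log d` into `σ(n) ∑_{a ∣ m} a log a + σ(m) ∑_{b ∣ n} b log b`; dividing by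
`σ(m) σ(n)` and splitting `log (σ(m) σ(n))` gives additivity.
-/

open Finset

theorem Nat.Coprime.sum_divisors_mul_eq_sum_sum {M : Type*} [AddCommMonoid M] {m n : ℕ}
    (hmn : m.Coprime n) (f : ℕ → M) :
    ∑ d ∈ (m * n).divisors, f d = ∑ a ∈ m.divisors, ∑ b ∈ n.divisors, f (a * b) := by
  rw [Nat.divisors_mul, Finset.mul_def, sum_image hmn.mul_injOn_divisors, sum_product]

theorem sigma1_mul {m n : ℕ} (hmn : m.Coprime n) : sigma1 (m * n) = sigma1 m * sigma1 n :=
  hmn.sum_divisors_mul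

theorem sigma1_pos {n : ℕ} (hn : 0 < n) : 0 < sigma1 n :=
  sum_pos (fun _ hd => Nat.pos_of_mem_divisors hd) ⟨1, Nat.one_mem_divisors.2 hn.ne'⟩

theorem Real.mul_mul_log_mul (x y : ℝ) :
    x * y * log (x * y) = y * (x * log x) + x * (y * log y) := by
  have := negMulLog_mul x y
  simp only [negMulLog] at this
  linarith

theorem sum_divisors_mul_log_mul {m n : ℕ} (hmn : m.Coprime n) :
    ∑ d ∈ (m * n).divisors, (d : ℝ) * log d =
      sigma1 n * ∑ a ∈ m.divisors, (a : ℝ) * log a +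
        sigma1 m * ∑ b ∈ n.divisors, (b : ℝ) * log b := by
  simp only [hmn.sum_divisors_mul_eq_sum_sum, Nat.cast_mul, Real.mul_mul_log_mul,
    sum_add_distrib, ← sum_mul, ← mul_sum, sigma1, Nat.cast_sum]

theorem stmt_1 (m n : ℕ) (hm : 0 < m) (hn : 0 < n) (h : Nat.gcd m n = 1) :
    Hbar (m * n) = Hbar m + Hbar n := by
  have hσm : (sigma1 m : ℝ) ≠ 0 := by exact_mod_cast (sigma1_pos hm).ne'
  have hσn : (sigma1 n : ℝ) ≠ 0 := by exact_mod_cast (sigma1_pos hn).ne'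
  simp only [Hbar, sigma1_mul h, sum_divisors_mul_log_mul h, Nat.cast_mul, log_mul hσm hσn]
  field_simp
  ring
end

section
/- For a prime p, the limit as α → ∞ of H̄(p^α) equals (p·log p)/(p-1) - log(p-1). -/
open Real Filter

/-!
Pairing each divisor `d` of `n` with `n / d` gives `σ(n) = n S` and `∑_{d ∣ n} d log d = n (S log n - L)`,
where `S = ∑_{d ∣ n} 1/d` and `L = ∑_{d ∣ n} (log d)/d`; hence `H̄(n) = log S + L / S`. For `n = p^α`,
`S` and `L` are partial sums of `∑ p^{-i} = p/(p-1)` and `log p · ∑ i p^{-i} = p log p/(p-1)^2`,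
so `H̄(p^α) → log (p/(p-1)) + log p/(p-1)`.
-/

lemma Nat.sum_divisors_cast_eq_sum_div {K M : Type*} [DivisionSemiring K] [CharZero K]
    [AddCommMonoid M] {n : ℕ} (f : K → M) :
    ∑ d ∈ n.divisors, f d = ∑ d ∈ n.divisors, f (n / d) := by
  rw [← Nat.sum_div_divisors n (fun d => f d)]
  refine Finset.sum_congr rfl fun d hd => ?_
  rw [Nat.cast_div_charZero (Nat.dvd_of_mem_divisors hd)]

theorem Hbar_eq_log_add_div {n : ℕ} (hn : n ≠ 0) :
    Hbar n = Real.log (∑ d ∈ n.divisors, (d : ℝ)⁻¹) +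
      (∑ d ∈ n.divisors, Real.log d / d) / ∑ d ∈ n.divisors, (d : ℝ)⁻¹ := by
  set S := ∑ d ∈ n.divisors, (d : ℝ)⁻¹
  set L := ∑ d ∈ n.divisors, Real.log d / d
  have hn' : (n : ℝ) ≠ 0 := Nat.cast_ne_zero.mpr hn
  have hS : 0 < S := Finset.sum_pos (fun d hd => by simpa using Nat.pos_of_mem_divisors hd)
    ⟨1, Nat.one_mem_divisors.mpr hn⟩
  have hsigma : (sigma1 n : ℝ) = n * S := by
    rw [sigma1, Nat.cast_sum, Nat.sum_divisors_cast_eq_sum_div (fun x : ℝ => x), Finset.mul_sum]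
    simp only [div_eq_mul_inv]
  have hentropy : ∑ d ∈ n.divisors, (d : ℝ) * Real.log d = n * (Real.log n * S - L) := by
    rw [Nat.sum_divisors_cast_eq_sum_div (fun x : ℝ => x * Real.log x), mul_sub, Finset.mul_sum,
      Finset.mul_sum, Finset.mul_sum, ← Finset.sum_sub_distrib]
    refine Finset.sum_congr rfl fun d hd => ?_
    have hd : (d : ℝ) ≠ 0 := by simpa using (Nat.pos_of_mem_divisors hd).ne'
    rw [Real.log_div hn' hd]
    field_simp
  rw [Hbar, hsigma, hentropy, Real.log_mul hn' hS.ne']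
  field_simp
  ring

lemma sum_divisors_prime_pow_inv {p : ℕ} (hp : p.Prime) (α : ℕ) :
    ∑ d ∈ (p ^ α).divisors, (d : ℝ)⁻¹ = ∑ i ∈ Finset.range (α + 1), (p : ℝ)⁻¹ ^ i := by
  simp [Nat.sum_divisors_prime_pow hp, inv_pow]

lemma sum_divisors_prime_pow_log_div {p : ℕ} (hp : p.Prime) (α : ℕ) :
    ∑ d ∈ (p ^ α).divisors, Real.log d / d =
      Real.log p * ∑ i ∈ Finset.range (α + 1), (i : ℝ) * (p : ℝ)⁻¹ ^ i := by
  rw [Nat.sum_divisors_prime_pow hp, Finset.mul_sum]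
  refine Finset.sum_congr rfl fun i _ => ?_
  push_cast
  rw [Real.log_pow, inv_pow]
  ring

theorem stmt_2 (p : ℕ) (hp : p.Prime) :
    Tendsto (fun α : ℕ => Hbar (p ^ α)) atTop
      (nhds ((p : ℝ) * Real.log p / ((p : ℝ) - 1) - Real.log ((p : ℝ) - 1))) := by
  have hp1 : (1 : ℝ) < p := by exact_mod_cast hp.one_lt
  have hr0 : 0 ≤ (p : ℝ)⁻¹ := by positivity
  have hr1 : (p : ℝ)⁻¹ < 1 := inv_lt_one_of_one_lt₀ hp1
  have hS := (hasSum_geometric_of_lt_one hr0 hr1).tendsto_sum_nat.comp (tendsto_add_atTop_nat 1)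
  have hL := (hasSum_coe_mul_geometric_of_norm_lt_one
    (by rwa [Real.norm_of_nonneg hr0])).tendsto_sum_nat.comp (tendsto_add_atTop_nat 1)
  have hlim := (hS.log (by positivity)).add ((hL.const_mul (Real.log p)).div hS (by positivity))
  have h1r : 1 - (p : ℝ)⁻¹ = ((p : ℝ) - 1) / p := by field_simp
  rw [h1r, inv_div, Real.log_div (by positivity) (by linarith)] at hlim
  convert hlim using 2 with α
  · simp only [Function.comp_apply, Pi.div_apply, Hbar_eq_log_add_div (pow_ne_zero α hp.ne_zero),
      sum_divisors_prime_pow_inv hp, sum_divisors_prime_pow_log_div hp]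
  · have hp1' : (p : ℝ) - 1 ≠ 0 := by linarith
    field_simp
    ring
end

section
/- Let p be prime with gcd(n,p)=1, n ≥ 2. Then H(n·p^α) = (Ω(n)·H(n))/(Ω(n)+α) + log(Ω(n)+α) - (Ω(n)·log Ω(n) + α·log α)/(Ω(n)+α) for all α ≥ 1. -/
open Real Filter

/-- Ω(n): number of prime factors of n counted with multiplicity. -/
def Omega (n : ℕ) : ℕ := ∑ p ∈ n.primeFactors, n.factorization p

/-- The entropy H of a natural number. -/
noncomputable def Hent (n : ℕ) : ℝ :=
  Real.log (Omega n) -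
    (1 / (Omega n : ℝ)) *
      ∑ p ∈ n.primeFactors, (n.factorization p : ℝ) * Real.log (n.factorization p)

/-!
Both Ω(m) and S(m) = Σ αᵢ log αᵢ are sums of a function of the exponents of m, hence additive
over coprime factors, and for a prime power p^α they equal α and α log α. Since
Ω(m)·H(m) = Ω(m) log Ω(m) - S(m), the formula is then a rearrangement of
H(n p^α) = log (Ω(n) + α) - (S(n) + α log α) / (Ω(n) + α).
-/

namespace Nat

variable {M : Type*} [AddCommMonoid M]

lemma Coprime.sum_primeFactors_factorization_mul {a b : ℕ} (hab : Coprime a b) (g : ℕ → M) :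
    ∑ q ∈ (a * b).primeFactors, g ((a * b).factorization q) =
      ∑ q ∈ a.primeFactors, g (a.factorization q) +
        ∑ q ∈ b.primeFactors, g (b.factorization q) := by
  have hsum (m : ℕ) :
      ∑ q ∈ m.primeFactors, g (m.factorization q) = m.factorization.sum fun _ k => g k := by
    rw [Finsupp.sum, support_factorization]
  rw [hsum, hsum, hsum, factorization_mul_of_coprime hab]
  apply Finsupp.sum_add_index_of_disjoint
  simpa only [support_factorization] using hab.disjoint_primeFactors

lemma Prime.sum_primeFactors_factorization_pow {p : ℕ} (hp : p.Prime) (k : ℕ) (g : ℕ → M)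
    (hg : g 0 = 0) : ∑ q ∈ (p ^ k).primeFactors, g ((p ^ k).factorization q) = g k := by
  rcases eq_or_ne k 0 with rfl | hk
  · simp [hg]
  · simp [primeFactors_prime_pow hk hp, hp.factorization_pow]

end Nat

noncomputable def factorizationMulLogSum (n : ℕ) : ℝ :=
  ∑ p ∈ n.primeFactors, (n.factorization p : ℝ) * Real.log (n.factorization p)

lemma Omega_mul_of_coprime {a b : ℕ} (hab : a.Coprime b) : Omega (a * b) = Omega a + Omega b :=
  hab.sum_primeFactors_factorization_mul fun k => k

lemma Omega_prime_pow {p : ℕ} (hp : p.Prime) (k : ℕ) : Omega (p ^ k) = k :=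
  hp.sum_primeFactors_factorization_pow k (fun k => k) rfl

lemma factorizationMulLogSum_mul_of_coprime {a b : ℕ} (hab : a.Coprime b) :
    factorizationMulLogSum (a * b) = factorizationMulLogSum a + factorizationMulLogSum b :=
  hab.sum_primeFactors_factorization_mul fun k => (k : ℝ) * Real.log k

lemma factorizationMulLogSum_prime_pow {p : ℕ} (hp : p.Prime) (k : ℕ) :
    factorizationMulLogSum (p ^ k) = k * Real.log k :=
  hp.sum_primeFactors_factorization_pow k (fun k => (k : ℝ) * Real.log k) (by simp)

lemma Omega_mul_Hent (n : ℕ) :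
    (Omega n : ℝ) * Hent n = Omega n * Real.log (Omega n) - factorizationMulLogSum n := by
  rw [Hent, ← factorizationMulLogSum]
  rcases eq_or_ne (Omega n) 0 with hΩ | hΩ
  · have hzero : ∀ q ∈ n.primeFactors, n.factorization q = 0 := Finset.sum_eq_zero_iff.1 hΩ
    have : factorizationMulLogSum n = 0 := Finset.sum_eq_zero fun q hq => by simp [hzero q hq]
    simp [hΩ, this]
  · field_simp

theorem stmt_9_general (n p : ℕ) (hp : p.Prime) (hcop : ¬ p ∣ n)
    (α : ℕ) :
    Hent (n * p ^ α) =
      (Omega n : ℝ) * Hent n / ((Omega n : ℝ) + α) +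
        Real.log ((Omega n : ℝ) + α) -
        ((Omega n : ℝ) * Real.log (Omega n) + (α : ℝ) * Real.log α) /
          ((Omega n : ℝ) + α) := by
  have hcoprime : n.Coprime (p ^ α) := ((hp.coprime_iff_not_dvd.2 hcop).symm).pow_right α
  have hΩ : (Omega (n * p ^ α) : ℝ) = Omega n + α := by
    rw [Omega_mul_of_coprime hcoprime, Omega_prime_pow hp, Nat.cast_add]
  have hS : factorizationMulLogSum (n * p ^ α) = factorizationMulLogSum n + α * Real.log α := by
    rw [factorizationMulLogSum_mul_of_coprime hcoprime, factorizationMulLogSum_prime_pow hp]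
  rw [Omega_mul_Hent, Hent, ← factorizationMulLogSum, hΩ, hS]
  ring

theorem stmt_9 (n p : ℕ) (hn : 2 ≤ n) (hp : p.Prime) (hcop : ¬ p ∣ n)
    (α : ℕ) (hα : 1 ≤ α) :
    Hent (n * p ^ α) =
      (Omega n : ℝ) * Hent n / ((Omega n : ℝ) + α) +
        Real.log ((Omega n : ℝ) + α) -
        ((Omega n : ℝ) * Real.log (Omega n) + (α : ℝ) * Real.log α) /
          ((Omega n : ℝ) + α) :=
  stmt_9_general n p hp hcop α
end

section
/- If p is a prime not dividing n (n ≥ 2), then H̄(n·p^α) tends to H̄(n) + (p·log p)/(p-1) - log(p-1) as α → ∞. -/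
open Real Filter

/-!
`H̄(n)` is the entropy of the distribution on the divisors of `n` with `P(d) ∝ d`. For coprime
`m, n` the divisors of `mn` are the products of divisors of `m` and of `n`, and this distribution
is the product one, so `H̄` is additive on coprime arguments. On the divisors `p ^ i`, `i ≤ α`,
read in reverse order, the distribution is the geometric one with ratio `1/p` truncated at `α`;
its entropy tends to that of the full geometric distribution,
`h(1/p) / (1 - 1/p) = p log p / (p - 1) - log (p - 1)` with `h` the binary entropy.
-/

open Finset Topology

/-- Shannon entropy of the probability distribution on `s` proportional to the weights `w`.
`Hbar n` is the case of the divisors of `n`, each weighted by itself. -/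
noncomputable def weightEntropy {ι : Type*} (s : Finset ι) (w : ι → ℝ) : ℝ :=
  log (∑ i ∈ s, w i) + (∑ i ∈ s, negMulLog (w i)) / ∑ i ∈ s, w i

section weightEntropy

variable {ι κ : Type*} {s : Finset ι} {w v : ι → ℝ}

lemma weightEntropy_congr (h : ∀ i ∈ s, w i = v i) : weightEntropy s w = weightEntropy s v := by
  simp only [weightEntropy, sum_congr rfl h, sum_congr rfl fun i hi => congrArg negMulLog (h i hi)]

lemma weightEntropy_image [DecidableEq κ] {f : ι → κ} (hf : Set.InjOn f s) (w : κ → ℝ) :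
    weightEntropy (s.image f) w = weightEntropy s (fun i => w (f i)) := by
  simp only [weightEntropy, sum_image hf]

lemma weightEntropy_const_mul {c : ℝ} (hc : c ≠ 0) (hw : ∑ i ∈ s, w i ≠ 0) :
    weightEntropy s (fun i => c * w i) = weightEntropy s w := by
  simp only [weightEntropy, negMulLog_mul, sum_add_distrib, ← sum_mul, ← mul_sum, log_mul hc hw]
  simp only [negMulLog]
  field_simp
  ring

lemma weightEntropy_product {t : Finset κ} {u : κ → ℝ} (hw : ∑ i ∈ s, w i ≠ 0)
    (hu : ∑ j ∈ t, u j ≠ 0) :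
    weightEntropy (s ×ˢ t) (fun x => w x.1 * u x.2) = weightEntropy s w + weightEntropy t u := by
  simp only [weightEntropy, sum_product, negMulLog_mul, sum_add_distrib, ← sum_mul, ← mul_sum,
    log_mul hw hu]
  field_simp
  ring

lemma weightEntropy_range_reflect (N : ℕ) (w : ℕ → ℝ) :
    weightEntropy (range N) (fun i => w (N - 1 - i)) = weightEntropy (range N) w := by
  simp only [weightEntropy, sum_range_reflect w, sum_range_reflect (fun i => negMulLog (w i))]

lemma weightEntropy_range_pow_eq_inv {q : ℝ} (hq : 0 < q) (N : ℕ) :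
    weightEntropy (range N) (q ^ ·) = weightEntropy (range N) (q⁻¹ ^ ·) := by
  rcases N with _ | M
  · rfl
  calc weightEntropy (range (M + 1)) (q ^ ·)
      = weightEntropy (range (M + 1)) (fun i => q ^ (M + 1 - 1 - i)) :=
        (weightEntropy_range_reflect _ _).symm
    _ = weightEntropy (range (M + 1)) (fun i => q ^ M * q⁻¹ ^ i) :=
        weightEntropy_congr fun i hi => by
          rw [Nat.add_sub_cancel, pow_sub₀ q hq.ne' (Nat.lt_succ_iff.mp (mem_range.mp hi)), inv_pow]
    _ = weightEntropy (range (M + 1)) (q⁻¹ ^ ·) :=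
        weightEntropy_const_mul (pow_ne_zero M hq.ne')
          (sum_pos (fun i _ => by positivity) nonempty_range_add_one).ne'

lemma tendsto_weightEntropy_geometric {r : ℝ} (hr₀ : 0 < r) (hr₁ : r < 1) :
    Tendsto (fun N => weightEntropy (range N) (r ^ ·)) atTop (𝓝 (binEntropy r / (1 - r))) := by
  have hB := (hasSum_geometric_of_lt_one hr₀.le hr₁).tendsto_sum_nat
  have hA := (hasSum_coe_mul_geometric_of_norm_lt_one
    (by rwa [norm_of_nonneg hr₀.le] : ‖r‖ < 1)).tendsto_sum_nat
  have hne : (1 - r)⁻¹ ≠ 0 := inv_ne_zero (sub_pos.mpr hr₁).ne'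
  have hlim := ((continuousAt_log hne).tendsto.comp hB).sub ((hA.div hB hne).const_mul (log r))
  have hval : log (1 - r)⁻¹ - log r * (r / (1 - r) ^ 2 / (1 - r)⁻¹) = binEntropy r / (1 - r) := by
    have h1r : 1 - r ≠ 0 := (sub_pos.mpr hr₁).ne'
    rw [binEntropy, log_inv, log_inv]
    field_simp
    ring
  rw [hval] at hlim
  refine hlim.congr fun N => ?_
  have hterm : ∀ k : ℕ, negMulLog (r ^ k) = -log r * (k * r ^ k) := fun k => by
    rw [negMulLog, log_pow]; ring
  simp only [Function.comp_apply, Pi.div_apply]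
  rw [weightEntropy, sum_congr rfl fun k _ => hterm k, ← mul_sum]
  ring

end weightEntropy

lemma Hbar_eq_weightEntropy (n : ℕ) : Hbar n = weightEntropy n.divisors (fun d => d) := by
  simp only [Hbar, weightEntropy, sigma1, negMulLog, Nat.cast_sum, neg_mul, sum_neg_distrib]
  ring

lemma Hbar_mul_of_coprime {m n : ℕ} (hmn : m.Coprime n) : Hbar (m * n) = Hbar m + Hbar n := by
  rcases eq_or_ne m 0 with rfl | hm
  · simp [(Nat.coprime_zero_left n).mp hmn, Hbar, sigma1]
  rcases eq_or_ne n 0 with rfl | hn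
  · simp [(Nat.coprime_zero_right m).mp hmn, Hbar, sigma1]
  have hpos {k : ℕ} (hk : k ≠ 0) : ∑ d ∈ k.divisors, (d : ℝ) ≠ 0 :=
    (sum_pos (fun d hd => by exact_mod_cast Nat.pos_of_mem_divisors hd)
      ⟨1, Nat.one_mem_divisors.mpr hk⟩).ne'
  rw [Hbar_eq_weightEntropy, Nat.divisors_mul, mul_def, weightEntropy_image hmn.mul_injOn_divisors]
  simp only [Nat.cast_mul]
  rw [weightEntropy_product (hpos hm) (hpos hn), Hbar_eq_weightEntropy, Hbar_eq_weightEntropy]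

lemma Hbar_prime_pow_s11 {p : ℕ} (hp : p.Prime) (α : ℕ) :
    Hbar (p ^ α) = weightEntropy (range (α + 1)) ((p : ℝ)⁻¹ ^ ·) := by
  rw [Hbar_eq_weightEntropy, Nat.divisors_prime_pow hp, map_eq_image,
    Function.Embedding.coeFn_mk, weightEntropy_image (Nat.pow_right_injective hp.two_le).injOn]
  simp only [Nat.cast_pow]
  exact weightEntropy_range_pow_eq_inv (by exact_mod_cast hp.pos) _

lemma tendsto_Hbar_prime_pow {p : ℕ} (hp : p.Prime) :
    Tendsto (fun α => Hbar (p ^ α)) atTop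
      (𝓝 ((p : ℝ) * log p / ((p : ℝ) - 1) - log ((p : ℝ) - 1))) := by
  have hp₁ : (1 : ℝ) < p := by exact_mod_cast hp.one_lt
  have hlim := (tendsto_weightEntropy_geometric (inv_pos.mpr (by linarith))
    (inv_lt_one_of_one_lt₀ hp₁)).comp (tendsto_add_atTop_nat 1)
  have hval : binEntropy (p : ℝ)⁻¹ / (1 - (p : ℝ)⁻¹) = p * log p / (p - 1) - log (p - 1) := by
    have hp₀ : (p : ℝ) ≠ 0 := by linarith
    have hp₁' : (p : ℝ) - 1 ≠ 0 := by linarith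
    have hsub : 1 - (p : ℝ)⁻¹ = (p - 1) / p := by field_simp
    rw [binEntropy, inv_inv, hsub, inv_div, log_div hp₀ hp₁']
    field_simp
    ring
  rw [hval] at hlim
  exact hlim.congr fun α => (Hbar_prime_pow_s11 hp α).symm

theorem stmt_11_general (n p : ℕ) (hp : p.Prime) (hcop : ¬ p ∣ n) :
    Tendsto (fun α : ℕ => Hbar (n * p ^ α)) atTop
      (nhds (Hbar n + (p : ℝ) * Real.log p / ((p : ℝ) - 1) - Real.log ((p : ℝ) - 1))) := by
  have hcoprime : n.Coprime p := Nat.coprime_comm.mp (hp.coprime_iff_not_dvd.mpr hcop)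
  rw [add_sub_assoc]
  exact ((tendsto_Hbar_prime_pow hp).const_add (Hbar n)).congr fun α =>
    (Hbar_mul_of_coprime (hcoprime.pow_right α)).symm

theorem stmt_11 (n p : ℕ) (hn : 2 ≤ n) (hp : p.Prime) (hcop : ¬ p ∣ n) :
    Tendsto (fun α : ℕ => Hbar (n * p ^ α)) atTop
      (nhds (Hbar n + (p : ℝ) * Real.log p / ((p : ℝ) - 1) - Real.log ((p : ℝ) - 1))) :=
  stmt_11_general n p hp hcop
end

section
/- Let p, q, t be distinct primes and k ≥ 1. For m = p^k·q and n = p^k·t we have H(mn) < H(m) + H(n). -/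
/-!
With `S(n) = ∑ αᵢ log αᵢ` we have `H(n) = log Ω(n) - S(n) / Ω(n)`, and both `Ω` and `S` are
additive over coprime factors. Hence `H(m) = H(n) = log (k + 1) - k log k / (k + 1)`, while
`H(mn) = H(m) + log 2 / (k + 1)`, so the claim reduces to `log 2 < (k + 1) log (k + 1) - k log k`,
which follows from `k log k < k log (k + 1)` and `log 2 ≤ log (k + 1)`.
-/

open Real Filter

open ArithmeticFunction (cardFactors_eq_sum_factorization cardFactors_mul cardFactors_apply_prime
  cardFactors_apply_prime_pow)
open scoped ArithmeticFunction.Omega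

noncomputable def mulLogSum (n : ℕ) : ℝ := n.factorization.sum fun _ a => (a : ℝ) * log a

lemma Omega_eq_cardFactors (n : ℕ) : Omega n = Ω n := by
  rw [cardFactors_eq_sum_factorization, Finsupp.sum, Nat.support_factorization]
  rfl

lemma Hent_eq (n : ℕ) : Hent n = log (Ω n) - mulLogSum n / Ω n := by
  rw [Hent, mulLogSum, Finsupp.sum, Nat.support_factorization, Omega_eq_cardFactors]
  ring

lemma mulLogSum_mul_of_coprime {a b : ℕ} (hab : a.Coprime b) :
    mulLogSum (a * b) = mulLogSum a + mulLogSum b := by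
  rw [mulLogSum, Nat.factorization_mul_of_coprime hab,
    Finsupp.sum_add_index_of_disjoint hab.disjoint_primeFactors]
  rfl

lemma mulLogSum_prime_pow {p : ℕ} (hp : p.Prime) (k : ℕ) : mulLogSum (p ^ k) = k * log k := by
  simp [mulLogSum, hp.factorization_pow]

lemma mulLogSum_prime {p : ℕ} (hp : p.Prime) : mulLogSum p = 0 := by
  simpa using mulLogSum_prime_pow hp 1

lemma Hent_prime_pow_mul_prime {p q : ℕ} (hp : p.Prime) (hq : q.Prime) (hpq : p ≠ q) (k : ℕ) :
    Hent (p ^ k * q) = log (k + 1) - k * log k / (k + 1) := by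
  have hcop : (p ^ k).Coprime q := ((Nat.coprime_primes hp hq).2 hpq).pow_left k
  rw [Hent_eq, mulLogSum_mul_of_coprime hcop, mulLogSum_prime_pow hp, mulLogSum_prime hq,
    cardFactors_mul (pow_ne_zero _ hp.ne_zero) hq.ne_zero, cardFactors_apply_prime_pow hp,
    cardFactors_apply_prime hq]
  push_cast
  ring

lemma Hent_prime_pow_mul_prime_mul_prime {p q t : ℕ} (hp : p.Prime) (hq : q.Prime)
    (ht : t.Prime) (hpq : p ≠ q) (hpt : p ≠ t) (hqt : q ≠ t) (j : ℕ) :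
    Hent (p ^ j * (q * t)) = log (j + 2) - j * log j / (j + 2) := by
  have hcop : (p ^ j).Coprime (q * t) :=
    (((Nat.coprime_primes hp hq).2 hpq).mul_right ((Nat.coprime_primes hp ht).2 hpt)).pow_left j
  rw [Hent_eq, mulLogSum_mul_of_coprime hcop, mulLogSum_prime_pow hp,
    mulLogSum_mul_of_coprime ((Nat.coprime_primes hq ht).2 hqt), mulLogSum_prime hq,
    mulLogSum_prime ht,
    cardFactors_mul (pow_ne_zero _ hp.ne_zero) (mul_ne_zero hq.ne_zero ht.ne_zero),
    cardFactors_mul hq.ne_zero ht.ne_zero, cardFactors_apply_prime_pow hp,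
    cardFactors_apply_prime hq, cardFactors_apply_prime ht]
  push_cast
  ring

lemma log_two_add_mul_log_lt {K : ℝ} (hK : 1 ≤ K) :
    log 2 + K * log K < (K + 1) * log (K + 1) := by
  have hlog : K * log K < K * log (K + 1) :=
    mul_lt_mul_of_pos_left (log_lt_log (by linarith) (lt_add_one K)) (by linarith)
  have hlog2 : log 2 ≤ log (K + 1) := log_le_log two_pos (by linarith)
  linarith

lemma log_sub_mul_log_div_lt {K : ℝ} (hK : 1 ≤ K) :
    log (2 * K + 2) - 2 * K * log (2 * K) / (2 * K + 2) <
      2 * (log (K + 1) - K * log K / (K + 1)) := by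
  have hK1 : 0 < K + 1 := by linarith
  have hgain := log_two_add_mul_log_lt hK
  rw [show 2 * K + 2 = 2 * (K + 1) by ring, log_mul two_ne_zero hK1.ne',
    log_mul two_ne_zero (by linarith), ← sub_pos]
  have expand : 2 * (log (K + 1) - K * log K / (K + 1)) -
      (log 2 + log (K + 1) - 2 * K * (log 2 + log K) / (2 * (K + 1))) =
      ((K + 1) * log (K + 1) - (log 2 + K * log K)) / (K + 1) := by
    field_simp
    ring
  rw [expand]
  exact div_pos (by linarith) hK1

theorem stmt_12 (p q t k : ℕ) (hp : p.Prime) (hq : q.Prime) (ht : t.Prime)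
    (hpq : p ≠ q) (hpt : p ≠ t) (hqt : q ≠ t) (hk : 1 ≤ k) :
    Hent ((p ^ k * q) * (p ^ k * t)) < Hent (p ^ k * q) + Hent (p ^ k * t) := by
  rw [show (p ^ k * q) * (p ^ k * t) = p ^ (2 * k) * (q * t) by ring,
    Hent_prime_pow_mul_prime_mul_prime hp hq ht hpq hpt hqt, Hent_prime_pow_mul_prime hp hq hpq,
    Hent_prime_pow_mul_prime hp ht hpt, ← two_mul]
  push_cast
  exact log_sub_mul_log_div_lt (mod_cast hk)
end

section
/- Let p be a prime not dividing n (n ≥ 2) and α ≥ β ≥ 1 integers. If β ≥ Ω(n)·e^{-H(n)} then H(n·p^α) ≤ H(n·p^β); if α ≤ Ω(n)·e^{-H(n)} then H(n·p^α) ≥ H(n·p^β). -/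
open Real Filter

noncomputable def sumMulLogFactorization (n : ℕ) : ℝ :=
  ∑ p ∈ n.primeFactors, (n.factorization p : ℝ) * Real.log (n.factorization p)

noncomputable def entropyCurve (Ω S t : ℝ) : ℝ :=
  Real.log (Ω + t) - (S + t * Real.log t) / (Ω + t)

theorem Hent_eq_log_sub_div (n : ℕ) :
    Hent n = Real.log (Omega n) - sumMulLogFactorization n / Omega n := by
  rw [Hent, sumMulLogFactorization, one_div_mul_eq_div]

section entropyCurve

variable {Ω S : ℝ}

theorem hasDerivAt_entropyCurve {t : ℝ} (hΩ : 0 ≤ Ω) (ht : 0 < t) :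
    HasDerivAt (entropyCurve Ω S) ((S - Ω * Real.log t) / (Ω + t) ^ 2) t := by
  have hne : Ω + t ≠ 0 := by positivity
  have hlin : HasDerivAt (fun t : ℝ => Ω + t) 1 t := (hasDerivAt_id t).const_add Ω
  have hlog : HasDerivAt (fun t : ℝ => Real.log (Ω + t)) (1 / (Ω + t)) t := by
    simpa using hlin.log hne
  have hquot := ((Real.hasDerivAt_mul_log ht.ne').const_add S).div hlin hne
  refine (hlog.sub hquot).congr_deriv ?_
  field_simp
  ring

theorem entropyCurve_monotoneOn (hΩ : 0 < Ω) :
    MonotoneOn (entropyCurve Ω S) (Set.Ioc 0 (exp (S / Ω))) := by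
  refine monotoneOn_of_deriv_nonneg (convex_Ioc _ _)
    (fun t ht => (hasDerivAt_entropyCurve hΩ.le ht.1).continuousAt.continuousWithinAt)
    (fun t ht => ?_) (fun t ht => ?_) <;> rw [interior_Ioc] at ht
  · exact (hasDerivAt_entropyCurve hΩ.le ht.1).differentiableAt.differentiableWithinAt
  · rw [(hasDerivAt_entropyCurve hΩ.le ht.1).deriv]
    have hlog : Real.log t ≤ S / Ω := (Real.log_le_iff_le_exp ht.1).2 ht.2.le
    have : Ω * Real.log t ≤ S := by rwa [le_div_iff₀' hΩ] at hlog
    exact div_nonneg (by linarith) (by positivity)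

theorem entropyCurve_antitoneOn (hΩ : 0 < Ω) :
    AntitoneOn (entropyCurve Ω S) (Set.Ici (exp (S / Ω))) := by
  refine antitoneOn_of_deriv_nonpos (convex_Ici _) (fun t ht => ?_) (fun t ht => ?_)
    (fun t ht => ?_) <;> try rw [interior_Ici] at ht
  · exact (hasDerivAt_entropyCurve hΩ.le ((exp_pos _).trans_le ht)).continuousAt.continuousWithinAt
  · exact (hasDerivAt_entropyCurve hΩ.le ((exp_pos _).trans ht)).differentiableAt
      |>.differentiableWithinAt
  · have ht0 : 0 < t := (exp_pos _).trans ht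
    rw [(hasDerivAt_entropyCurve hΩ.le ht0).deriv]
    have hlog : S / Ω ≤ Real.log t := (Real.le_log_iff_exp_le ht0).2 ht.le
    have : S ≤ Ω * Real.log t := by rwa [div_le_iff₀' hΩ] at hlog
    exact div_nonpos_of_nonpos_of_nonneg (by linarith) (by positivity)

end entropyCurve

section mulPrimePow

variable {n p k : ℕ}

theorem sum_primeFactors_mul_prime_pow {M : Type*} [AddCommMonoid M] (f : ℕ → M)
    (hp : p.Prime) (hpn : ¬ p ∣ n) (hk : k ≠ 0) :
    ∑ q ∈ (n * p ^ k).primeFactors, f ((n * p ^ k).factorization q) =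
      ∑ q ∈ n.primeFactors, f (n.factorization q) + f k := by
  have hn : n ≠ 0 := by rintro rfl; exact hpn (dvd_zero p)
  have hpk : p ^ k ≠ 0 := pow_ne_zero _ hp.ne_zero
  have hp_notMem : p ∉ n.primeFactors := fun h => hpn (Nat.dvd_of_mem_primeFactors h)
  have hfac : (n * p ^ k).factorization = n.factorization + Finsupp.single p k := by
    rw [Nat.factorization_mul hn hpk, hp.factorization_pow]
  rw [Nat.primeFactors_mul hn hpk, Nat.primeFactors_prime_pow hk hp,
    Finset.sum_union (Finset.disjoint_singleton_right.2 hp_notMem), Finset.sum_singleton, hfac]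
  congr 1
  · refine Finset.sum_congr rfl fun q hq => ?_
    rw [Finsupp.add_apply, Finsupp.single_eq_of_ne (by rintro rfl; exact hp_notMem hq), add_zero]
  · simp [Nat.factorization_eq_zero_of_not_dvd hpn]

theorem Omega_mul_prime_pow (hp : p.Prime) (hpn : ¬ p ∣ n) (hk : k ≠ 0) :
    Omega (n * p ^ k) = Omega n + k :=
  sum_primeFactors_mul_prime_pow id hp hpn hk

theorem sumMulLogFactorization_mul_prime_pow (hp : p.Prime) (hpn : ¬ p ∣ n) (hk : k ≠ 0) :
    sumMulLogFactorization (n * p ^ k) = sumMulLogFactorization n + k * Real.log k :=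
  sum_primeFactors_mul_prime_pow (fun a : ℕ => (a : ℝ) * Real.log a) hp hpn hk

theorem Hent_mul_prime_pow (hp : p.Prime) (hpn : ¬ p ∣ n) (hk : k ≠ 0) :
    Hent (n * p ^ k) = entropyCurve (Omega n) (sumMulLogFactorization n) k := by
  rw [Hent_eq_log_sub_div, Omega_mul_prime_pow hp hpn hk,
    sumMulLogFactorization_mul_prime_pow hp hpn hk, entropyCurve]
  push_cast
  ring

end mulPrimePow

theorem Omega_pos {n : ℕ} (hn : 2 ≤ n) : 0 < Omega n := by
  obtain ⟨q, hq, hqn⟩ := Nat.exists_prime_and_dvd (by omega : n ≠ 1)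
  exact Finset.sum_pos' (fun _ _ => Nat.zero_le _)
    ⟨q, Nat.mem_primeFactors.2 ⟨hq, hqn, by omega⟩, hq.factorization_pos_of_dvd (by omega) hqn⟩

theorem Omega_mul_exp_neg_Hent {n : ℕ} (hn : 0 < Omega n) :
    (Omega n : ℝ) * exp (-Hent n) = exp (sumMulLogFactorization n / Omega n) := by
  have hΩ : (0 : ℝ) < Omega n := Nat.cast_pos.2 hn
  rw [Hent_eq_log_sub_div, neg_sub, exp_sub, exp_log hΩ, mul_div_cancel₀ _ hΩ.ne']

theorem stmt_19 (n p : ℕ) (hn : 2 ≤ n) (hp : p.Prime) (hcop : ¬ p ∣ n)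
    (α β : ℕ) (hβ : 1 ≤ β) (hβα : β ≤ α) :
    ((Omega n : ℝ) * Real.exp (-Hent n) ≤ (β : ℝ) →
        Hent (n * p ^ α) ≤ Hent (n * p ^ β)) ∧
      ((α : ℝ) ≤ (Omega n : ℝ) * Real.exp (-Hent n) →
        Hent (n * p ^ β) ≤ Hent (n * p ^ α)) := by
  have hΩ : 0 < Omega n := Omega_pos hn
  have hΩ' : (0 : ℝ) < Omega n := Nat.cast_pos.2 hΩ
  have hβα' : (β : ℝ) ≤ α := by exact_mod_cast hβα
  have hβ' : (0 : ℝ) < β := Nat.cast_pos.2 hβ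
  rw [Hent_mul_prime_pow hp hcop (by omega : α ≠ 0),
    Hent_mul_prime_pow hp hcop (by omega : β ≠ 0), Omega_mul_exp_neg_Hent hΩ]
  refine ⟨fun h => entropyCurve_antitoneOn hΩ' h (h.trans hβα') hβα',
    fun h => entropyCurve_monotoneOn hΩ' ⟨hβ', hβα'.trans h⟩ ⟨hβ'.trans_le hβα', h⟩ hβα'⟩
end
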